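/- arXiv:1802.02486 — 2 statements merged into one kernel-verified Lean document; each statement's English description precedes it below -/
import Mathlib

section
/- Let 𝒜 be an s*-algebra with positive central control C, and define r ∈ A_b by π_b(r) = (1 + π(C))⁻¹ for each irreducible admissible π (where π(C) = c_π·1 is a nonnegative scalar). For f_M ∈ C_c((0,1]) with f_M(x) = 1 for x ≥ (1+M)⁻¹, the element e_M = f_M(r) lies in A_c and satisfies θ_M(e_M) = 1 in A_{≤M}. Consequently every s*-algebra has the Tietze extension property: the projection A_c → A_{≤M} is surjective for every M > 0. -/
/-!
The element `e_M = f_M(r)`, `r = (1 + C)⁻¹`, acts in every irreducible representation `p` as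
the scalar `g(c_p)` with `g = f_M ∘ (x ↦ (1 + x)⁻¹)`; any continuous `g` equal to `1` on `[0, M]`
and to `0` beyond some `M'` will do. Since `C` acts by scalars, `π_p(q(C)) = q(c_p)` for every real
polynomial `q`, so Weierstrass approximation of `g` on `[0, M'']` approximates `e_M` by elements
of `𝒜` uniformly on `P_{≤M''}`; the uniform bound comes from `‖1‖ ≤ 1` in a C*-algebra.
-/

open Polynomial

theorem CStarRing.norm_one_le {E : Type*} [NormedRing E] [StarRing E] [CStarRing E] :
    ‖(1 : E)‖ ≤ 1 := by
  cases subsingleton_or_nontrivial E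
  · simp [Subsingleton.elim (1 : E) 0]
  · exact CStarRing.norm_one.le

theorem CStarRing.norm_algebraMap_real_le {E : Type*} [NormedRing E] [StarRing E] [CStarRing E]
    [NormedAlgebra ℂ E] (x : ℝ) : ‖algebraMap ℝ E x‖ ≤ |x| := by
  rw [norm_algebraMap, Real.norm_eq_abs]
  exact mul_le_of_le_one_right (abs_nonneg x) CStarRing.norm_one_le

theorem AlgHom.map_aeval_of_map_eq_algebraMap {A B : Type*} [Ring A] [Algebra ℂ A] [Ring B]
    [Algebra ℂ B] (φ : A →ₐ[ℂ] B) {a : A} {x : ℝ} (h : φ a = algebraMap ℂ B x) (q : ℝ[X]) :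
    φ (aeval a q) = algebraMap ℝ B (q.eval x) := by
  rw [← aeval_algebraMap_apply_eq_algebraMap_eval, IsScalarTower.algebraMap_apply ℝ ℂ B x,
    Complex.coe_algebraMap, ← h]
  exact (aeval_algHom_apply (φ.restrictScalars ℝ) a q).symm

theorem exists_aeval_near_algebraMap_comp {𝒜 P : Type*} [Ring 𝒜] [Algebra ℂ 𝒜] (B : P → Type*)
    [∀ p, NormedRing (B p)] [∀ p, StarRing (B p)] [∀ p, CStarRing (B p)]
    [∀ p, NormedAlgebra ℂ (B p)] (π : ∀ p, 𝒜 →ₐ[ℂ] B p) {C : 𝒜} {c : P → ℝ}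
    (hc : ∀ p, 0 ≤ c p) (hC : ∀ p, π p C = algebraMap ℂ (B p) (c p)) {g : ℝ → ℝ} {M : ℝ}
    (hg : ContinuousOn g (Set.Icc 0 M)) {ε : ℝ} (hε : 0 < ε) :
    ∃ a : 𝒜, ∀ p, c p ≤ M → ‖algebraMap ℝ (B p) (g (c p)) - π p a‖ ≤ ε := by
  obtain ⟨q, hq⟩ := exists_polynomial_near_of_continuousOn 0 M g hg ε hε
  refine ⟨aeval C q, fun p hp => ?_⟩
  rw [(π p).map_aeval_of_map_eq_algebraMap (hC p), ← map_sub]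
  refine (CStarRing.norm_algebraMap_real_le _).trans ?_
  rw [abs_sub_comm]
  exact (hq (c p) ⟨hc p, hp⟩).le

def cutoff (M x : ℝ) : ℝ := min 1 (max 0 (M + 1 - x))

theorem continuous_cutoff (M : ℝ) : Continuous (cutoff M) := by
  unfold cutoff
  fun_prop

theorem cutoff_eq_one {M x : ℝ} (hx : x ≤ M) : cutoff M x = 1 := by
  unfold cutoff
  rw [max_eq_right (by linarith), min_eq_left (by linarith)]

theorem cutoff_eq_zero {M x : ℝ} (hx : M + 1 ≤ x) : cutoff M x = 0 := by
  unfold cutoff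
  rw [max_eq_left (by linarith), min_eq_right zero_le_one]

theorem abs_cutoff_le_one (M x : ℝ) : |cutoff M x| ≤ 1 := by
  unfold cutoff
  rw [abs_of_nonneg (le_min zero_le_one (le_max_left _ _))]
  exact min_le_left _ _

theorem s_star_algebra_tietze_extension_general
    {𝒜 : Type*} [Ring 𝒜] [Algebra ℂ 𝒜] [StarRing 𝒜]
    {P : Type*} (B : P → Type*) [∀ p, NormedRing (B p)] [∀ p, StarRing (B p)]
    [∀ p, CStarRing (B p)] [∀ p, NormedAlgebra ℂ (B p)]
    (π : ∀ p, 𝒜 →⋆ₐ[ℂ] B p) (C : 𝒜) (c : P → ℝ) (hc : ∀ p, 0 ≤ c p)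
    (hC : ∀ p, π p C = algebraMap ℂ (B p) (c p)) :
    ∀ M : ℝ, 0 < M → ∃ (e : ∀ p, B p) (M' : ℝ), M < M' ∧
      (∀ p, c p ≤ M → e p = 1) ∧
      (∀ p, M' < c p → e p = 0) ∧
      (∃ K : ℝ, ∀ p, ‖e p‖ ≤ K) ∧
      (∀ M'' ε : ℝ, 0 < ε → ∃ a : 𝒜, ∀ p, c p ≤ M'' → ‖e p - π p a‖ ≤ ε) := by
  intro M _
  refine ⟨fun p => algebraMap ℝ (B p) (cutoff M (c p)), M + 1, by linarith,
    fun p hp => ?_, fun p hp => ?_, ⟨1, fun p => ?_⟩, fun M'' ε hε => ?_⟩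
  · simp only [cutoff_eq_one hp, map_one]
  · simp only [cutoff_eq_zero hp.le, map_zero]
  · exact (CStarRing.norm_algebraMap_real_le _).trans (abs_cutoff_le_one M (c p))
  · exact exists_aeval_near_algebraMap_comp B (fun p => (π p).toAlgHom) hc hC
      (continuous_cutoff M).continuousOn hε

/-- Tietze extension property for s*-algebras.  Let `𝒜` be a unital *-algebra
over `ℂ` with a positive central control `C`: for each irreducible admissible
representation `p` (with image in the C*-algebra `B p = B(H_p)`, via the unital
*-homomorphism `π p`), `C` acts as the nonnegative scalar `c p`.  Then for every
`M > 0` there is an element `e = e_M` of `A_c` (given by `e p = f_M((1+c p)⁻¹)`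
for suitable `f_M ∈ C_c((0,1])`): a uniformly bounded family `(e p)_p`,
approximable by elements of `𝒜` uniformly on every `P_{≤M''}` (so `e ∈ A_b`),
vanishing on `P_{≥M'}` for some `M'` (so `e ∈ A_c`), and with `e p = 1` for all
`p ∈ P_{≤M}` (so `θ_M(e) = 1` in `A_{≤M}`).  Consequently every s*-algebra has
the Tietze extension property: `A_c → A_{≤M}` is surjective for every `M`. -/
theorem s_star_algebra_tietze_extension
    {𝒜 : Type*} [Ring 𝒜] [Algebra ℂ 𝒜] [StarRing 𝒜]
    {P : Type*} (B : P → Type*) [∀ p, NormedRing (B p)] [∀ p, StarRing (B p)]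
    [∀ p, CStarRing (B p)] [∀ p, NormedAlgebra ℂ (B p)] [∀ p, CompleteSpace (B p)]
    (π : ∀ p, 𝒜 →⋆ₐ[ℂ] B p) (C : 𝒜) (c : P → ℝ) (hc : ∀ p, 0 ≤ c p)
    (hC : ∀ p, π p C = algebraMap ℂ (B p) (c p)) :
    ∀ M : ℝ, 0 < M → ∃ (e : ∀ p, B p) (M' : ℝ), M < M' ∧
      (∀ p, c p ≤ M → e p = 1) ∧
      (∀ p, M' < c p → e p = 0) ∧
      (∃ K : ℝ, ∀ p, ‖e p‖ ≤ K) ∧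
      (∀ M'' ε : ℝ, 0 < ε → ∃ a : 𝒜, ∀ p, c p ≤ M'' → ‖e p - π p a‖ ≤ ε) :=
  s_star_algebra_tietze_extension_general B π C c hc hC
end

section
/- In the Hecke algebra representation of Lemma (quantum Cayley–Hamilton setup), define L_k = F_k* Z_{N,N+1} F_k for 1 ≤ k ≤ N, where F_k = R̂_{N−1,N} ⋯ R̂_{k+1,k+2} R̂_{k,k+1} and F_N = 1. Then the L_k pairwise commute, and L_N L_{N−1} ⋯ L_k = (Z_{N,N+1} F_k)^{N−k+1} for all 1 ≤ k ≤ N. -/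
namespace ReflEqAux

def Wword {R : Type*} [Ring R] (E : ℕ → R) (k : ℕ) : ℕ → R
  | 0 => 1
  | j+1 => Wword E k j * E (k+j)

theorem Wword_cons {R : Type*} [Ring R] (E : ℕ → R) (k : ℕ) :
    ∀ j, Wword E k (j+1) = E k * Wword E (k+1) j := by
  intro j
  induction j with
  | zero => simp [Wword]
  | succ j ih =>
    show Wword E k (j+1) * E (k+(j+1)) = E k * Wword E (k+1) (j+1)
    rw [ih, mul_assoc, show k+(j+1) = k+1+j from by omega]
    rfl

theorem refl_step {R : Type*} [Monoid R] (e Ee B : R)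
    (hbr : e * Ee * e = Ee * e * Ee)
    (hB : e * B = B * e)
    (hEB : Ee * B * Ee * B = B * Ee * B * Ee) :
    e * (Ee * B * Ee) * e * (Ee * B * Ee) = (Ee * B * Ee) * e * (Ee * B * Ee) * e := by
  have hbr0 : e * (Ee * e) = Ee * (e * Ee) := by simpa [mul_assoc] using hbr
  have hbr' : ∀ x : R, e * (Ee * (e * x)) = Ee * (e * (Ee * x)) := by
    intro x; simp only [← mul_assoc]; rw [hbr]
  have hB' : ∀ x : R, e * (B * x) = B * (e * x) := by
    intro x; simp only [← mul_assoc]; rw [hB]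
  have hEB' : ∀ x : R, Ee * (B * (Ee * (B * x))) = B * (Ee * (B * (Ee * x))) := by
    intro x; simp only [← mul_assoc]; rw [hEB]
  simp only [mul_assoc]
  calc e * (Ee * (B * (Ee * (e * (Ee * (B * Ee))))))
      = e * (Ee * (B * (e * (Ee * (e * (B * Ee)))))) := by rw [← hbr' (B * Ee)]
    _ = e * (Ee * (e * (B * (Ee * (e * (B * Ee)))))) := by rw [← hB' (Ee * (e * (B * Ee)))]
    _ = e * (Ee * (e * (B * (Ee * (B * (e * Ee)))))) := by rw [hB' Ee]
    _ = Ee * (e * (Ee * (B * (Ee * (B * (e * Ee)))))) := by rw [hbr' (B * (Ee * (B * (e * Ee))))]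
    _ = Ee * (e * (B * (Ee * (B * (Ee * (e * Ee)))))) := by rw [hEB' (e * Ee)]
    _ = Ee * (B * (e * (Ee * (B * (Ee * (e * Ee)))))) := by rw [hB' (Ee * (B * (Ee * (e * Ee))))]
    _ = Ee * (B * (e * (Ee * (B * (e * (Ee * e)))))) := by rw [← hbr0]
    _ = Ee * (B * (e * (Ee * (e * (B * (Ee * e)))))) := by rw [← hB' (Ee * e)]
    _ = Ee * (B * (Ee * (e * (Ee * (B * (Ee * e)))))) := by rw [hbr' (B * (Ee * e))]


theorem key {R : Type*} [Ring R] [StarRing R]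
    (n : ℕ) (Z : R) (E : ℕ → R) (F L Pr : ℕ → R)
    (hEsa : ∀ l, star (E l) = E l)
    (hbraid : ∀ l, l + 1 < n → E l * E (l+1) * E l = E (l+1) * E l * E (l+1))
    (hfar : ∀ l m, l + 2 ≤ m → E l * E m = E m * E l)
    (hZcomm : ∀ l, l + 1 < n → Z * E l = E l * Z)
    (hrefl : ∀ l, l + 1 = n → Z * E l * Z * E l = E l * Z * E l * Z)
    (hFlast : F n = 1)
    (hFstep : ∀ k, k < n → F k = F (k+1) * E k)
    (hL : ∀ k, k ≤ n → L k = star (F k) * Z * F k)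
    (hPrlast : Pr n = L n)
    (hPrstep : ∀ k, k < n → Pr k = Pr (k+1) * L k) :
    (∀ k k', k < k' → k' ≤ n → L k * L k' = L k' * L k) ∧
    (∀ k, k ≤ n → Pr k = (Z * F k) ^ (n + 1 - k)) := by
  have hFsa : ∀ k, k < n → star (F k) = E k * star (F (k+1)) := by
    intro k hk; rw [hFstep k hk, star_mul, hEsa]
  -- E j commutes with F m for j+2 ≤ m ≤ n
  have hEF : ∀ m, m ≤ n → ∀ j, j + 2 ≤ m → E j * F m = F m * E j := by
    intro m hm
    induction hm using Nat.decreasingInduction with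
    | self => intro j _; rw [hFlast, one_mul, mul_one]
    | of_succ k hk ih =>
      intro j hj
      rw [hFstep k hk]
      simp only [← mul_assoc]
      rw [ih j (by omega), mul_assoc, mul_assoc, hfar j k hj]
  have hEFstar : ∀ m, m ≤ n → ∀ j, j + 2 ≤ m → E j * star (F m) = star (F m) * E j := by
    intro m hm j hj
    have := congrArg star (hEF m hm j hj)
    rw [star_mul, star_mul, hEsa] at this
    exact this.symm
  have hEL : ∀ m, m ≤ n → ∀ j, j + 2 ≤ m → E j * L m = L m * E j := by
    intro m hm j hj
    have hZj : E j * Z = Z * E j := (hZcomm j (by omega)).symm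
    rw [hL m hm]
    calc E j * (star (F m) * Z * F m)
        = E j * star (F m) * Z * F m := by simp only [mul_assoc]
      _ = star (F m) * E j * Z * F m := by rw [hEFstar m hm j hj]
      _ = star (F m) * Z * E j * F m := by
          rw [mul_assoc (star (F m)), hZj, ← mul_assoc]
      _ = star (F m) * Z * F m * E j := by
          rw [mul_assoc (star (F m) * Z), hEF m hm j hj, ← mul_assoc]
  have hLrec : ∀ k, k < n → L k = E k * L (k+1) * E k := by
    intro k hk
    rw [hL k (le_of_lt hk), hL (k+1) hk, hFsa k hk, hFstep k hk]
    simp only [mul_assoc]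
  have hLn : L n = Z := by rw [hL n le_rfl, hFlast, star_one, one_mul, mul_one]
  -- reflection equation for L along the chain
  have hreflL : ∀ k, k ≤ n → k < n →
      E k * L (k+1) * E k * L (k+1) = L (k+1) * E k * L (k+1) * E k := by
    intro k hk
    induction hk using Nat.decreasingInduction with
    | self => intro h; exact absurd h (lt_irrefl n)
    | of_succ k hkn ih =>
      intro _
      rcases eq_or_lt_of_le (Nat.succ_le_of_lt hkn) with h | h
      · have h' : k + 1 = n := h
        rw [h', hLn]
        exact (hrefl k h').symm
      · have hrec : L (k+1) = E (k+1) * L (k+2) * E (k+1) := hLrec (k+1) h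
        have hbr := hbraid k h
        have hB : E k * L (k+2) = L (k+2) * E k := hEL (k+2) h k le_rfl
        have hEB : E (k+1) * L (k+2) * E (k+1) * L (k+2)
            = L (k+2) * E (k+1) * L (k+2) * E (k+1) := ih h
        rw [hrec]
        exact refl_step (E k) (E (k+1)) (L (k+2)) hbr hB hEB
  -- adjacent commutation
  have hadj : ∀ k, k < n → L k * L (k+1) = L (k+1) * L k := by
    intro k hk
    rw [hLrec k hk]
    calc E k * L (k+1) * E k * L (k+1) = L (k+1) * E k * L (k+1) * E k :=
          hreflL k (le_of_lt hk) hk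
      _ = L (k+1) * (E k * L (k+1) * E k) := by simp only [mul_assoc]
  -- general commutation
  have hcomm : ∀ k, k ≤ n → ∀ k', k < k' → k' ≤ n → L k * L k' = L k' * L k := by
    intro k hk
    induction hk using Nat.decreasingInduction with
    | self => intro k' h1 h2; omega
    | of_succ k hkn ih =>
      intro k' h1 h2
      rcases eq_or_lt_of_le (Nat.succ_le_of_lt h1) with h | h
      · have h' : k + 1 = k' := h
        rw [← h']; exact hadj k hkn
      · have hEk : E k * L k' = L k' * E k := hEL k' h2 k (by omega)
        have hLk1 : L (k+1) * L k' = L k' * L (k+1) := ih k' h h2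
        rw [hLrec k hkn]
        calc E k * L (k+1) * E k * L k'
            = E k * L (k+1) * (E k * L k') := by rw [mul_assoc]
          _ = E k * L (k+1) * (L k' * E k) := by rw [hEk]
          _ = E k * (L (k+1) * L k') * E k := by simp only [mul_assoc]
          _ = E k * (L k' * L (k+1)) * E k := by rw [hLk1]
          _ = E k * L k' * (L (k+1) * E k) := by simp only [mul_assoc]
          _ = L k' * E k * (L (k+1) * E k) := by rw [hEk]
          _ = L k' * (E k * L (k+1) * E k) := by simp only [mul_assoc]
  -- shift lemma
  have hshiftF : ∀ l, l + 1 < n → ∀ k, k ≤ l → E l * F k = F k * E (l+1) := by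
    intro l hl k hk
    induction hk using Nat.decreasingInduction with
    | self =>
      rw [hFstep l (by omega), hFstep (l+1) hl]
      simp only [← mul_assoc]
      rw [hEF (l+2) (by omega) l le_rfl]
      simp only [mul_assoc]
      have hb : E l * (E (l+1) * E l) = E (l+1) * (E l * E (l+1)) := by
        simpa [mul_assoc] using hbraid l hl
      rw [hb]
    | of_succ k hkl ih =>
      rw [hFstep k (by omega)]
      simp only [← mul_assoc]
      rw [ih, mul_assoc, mul_assoc, ← hfar k (l+1) (by omega)]
  have hshift : ∀ l, l + 1 < n → ∀ k, k ≤ l → E l * (Z * F k) = (Z * F k) * E (l+1) := by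
    intro l hl k hk
    rw [← mul_assoc, ← hZcomm l hl, mul_assoc, hshiftF l hl k hk, ← mul_assoc]
  -- push lemma
  have hpush : ∀ j k l, k ≤ l → l + j < n →
      E l * (Z * F k) ^ j = (Z * F k) ^ j * E (l + j) := by
    intro j
    induction j with
    | zero => intro k l _ _; simp
    | succ j ih =>
      intro k l hkl hln
      rw [pow_succ', ← mul_assoc, hshift l (by omega) k hkl, mul_assoc,
        ih k (l+1) (by omega) (by omega), show l+1+j = l + (j+1) from by omega, ← mul_assoc]
  -- expansion lemma
  have hW : ∀ j k, k + j ≤ n → (Z * F k) ^ j = (Z * F (k+1)) ^ j * Wword E k j := by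
    intro j
    induction j with
    | zero => intro k _; simp [Wword]
    | succ j ih =>
      intro k hkj
      have hkn : k < n := by omega
      have hM : Z * F k = Z * F (k+1) * E k := by rw [hFstep k hkn, ← mul_assoc]
      have e2 : (Z * F k) * ((Z * F k) ^ j) = (Z * F (k+1)) * (E k * (Z * F k) ^ j) := by
        have := congrArg (· * (Z * F k) ^ j) hM
        rw [this, mul_assoc]
      calc (Z * F k) ^ (j+1) = (Z * F k) * (Z * F k) ^ j := pow_succ' _ _
        _ = (Z * F (k+1)) * (E k * (Z * F k) ^ j) := e2
        _ = (Z * F (k+1)) * ((Z * F k) ^ j * E (k + j)) := by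
            rw [hpush j k k le_rfl (by omega)]
        _ = (Z * F (k+1)) * ((Z * F (k+1)) ^ j * Wword E k j * E (k + j)) := by
            rw [ih k (by omega)]
        _ = (Z * F (k+1)) ^ (j+1) * Wword E k (j+1) := by
            rw [pow_succ']
            show _ = (Z * F (k+1)) * (Z * F (k+1)) ^ j * (Wword E k j * E (k+j))
            simp only [mul_assoc]
  have hWstar : ∀ k, k ≤ n → Wword E k (n - k) = star (F k) := by
    intro k hk
    induction hk using Nat.decreasingInduction with
    | self => simp [Nat.sub_self, Wword, hFlast]
    | of_succ k hkn ih =>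
      have h : n - k = (n - (k+1)) + 1 := by omega
      rw [h, Wword_cons, ih, hFsa k hkn]
  -- the product formula
  have hProd : ∀ k, k ≤ n → Pr k = (Z * F k) ^ (n + 1 - k) := by
    intro k hk
    induction hk using Nat.decreasingInduction with
    | self =>
      rw [show n + 1 - n = 1 from by omega, hPrlast, hLn, pow_one, hFlast, mul_one]
    | of_succ k hkn ih =>
      rw [hPrstep k hkn, ih, show n + 1 - (k+1) = n - k from by omega,
        show n + 1 - k = (n - k) + 1 from by omega, pow_succ, hW (n - k) k (by omega),
        hWstar k (le_of_lt hkn), hL k (le_of_lt hkn)]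
      simp only [mul_assoc]
  exact ⟨fun k k' h1 h2 => hcomm k (by omega) k' h1 h2, hProd⟩

end ReflEqAux

/-- Commutation of the operators `L_k` in the quantum Cayley–Hamilton setup.
Work in `(⊗_{i=1}^{n+1} M_{N}(ℂ)) ⊗ 𝒪_q(H(N))`, realized as matrices over the
reflection equation *-algebra `A`, with legs indexed `0,…,n` (so `N = n+1`
legs).  `E l` denotes `R̂_{l,l+1}` (self-adjoint, satisfying the braid
relations, commuting at distance `≥ 2`) and `MZ` denotes `Z_{n,n+1}` (the
generator `Z = Z*` placed on the last tensor leg and the algebra leg), which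
commutes with `E l` when `l+1 < n`, and satisfies the reflection equation with
the top `E`.  With `F k = E (n-1) ⋯ E k` (so `F n = 1`, `F k = F (k+1) · E k`)
and `L k = (F k)* · MZ · F k`, the `L k` pairwise commute and
`L n · L (n-1) ⋯ L k = (MZ · F k)^(n+1−k)` (the partial products `Pr k` being
characterized by `Pr n = L n`, `Pr k = Pr (k+1) · L k`). -/
theorem reflection_equation_Lk_commute_and_product (n : ℕ)
    {A : Type*} [Ring A] [StarRing A] [Algebra ℂ A] [StarModule ℂ A]
    (MZ : Matrix (Fin (n+1) → Fin (n+1)) (Fin (n+1) → Fin (n+1)) A)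
    (E : Fin n → Matrix (Fin (n+1) → Fin (n+1)) (Fin (n+1) → Fin (n+1)) A)
    (hZsa : star MZ = MZ)
    (hEsa : ∀ l, star (E l) = E l)
    (hbraid : ∀ l m : Fin n, (m : ℕ) = (l : ℕ) + 1 →
      E l * E m * E l = E m * E l * E m)
    (hfar : ∀ l m : Fin n, (l : ℕ) + 2 ≤ (m : ℕ) → E l * E m = E m * E l)
    (hZcomm : ∀ l : Fin n, (l : ℕ) + 1 < n → MZ * E l = E l * MZ)
    (hrefl : ∀ l : Fin n, (l : ℕ) + 1 = n →
      MZ * E l * MZ * E l = E l * MZ * E l * MZ)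
    (F L Pr : Fin (n+1) → Matrix (Fin (n+1) → Fin (n+1)) (Fin (n+1) → Fin (n+1)) A)
    (hFlast : F (Fin.last n) = 1)
    (hFstep : ∀ k : Fin n, F k.castSucc = F k.succ * E k)
    (hL : ∀ k, L k = star (F k) * MZ * F k)
    (hPrlast : Pr (Fin.last n) = L (Fin.last n))
    (hPrstep : ∀ k : Fin n, Pr k.castSucc = Pr k.succ * L k.castSucc) :
    (∀ k k' : Fin (n+1), L k * L k' = L k' * L k) ∧
    (∀ k : Fin (n+1), Pr k = (MZ * F k) ^ (n + 1 - (k : ℕ))) := by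
  classical
  have main := ReflEqAux.key (R := Matrix (Fin (n+1) → Fin (n+1)) (Fin (n+1) → Fin (n+1)) A)
    n MZ
    (fun l => if h : l < n then E ⟨l, h⟩ else 1)
    (fun k => if h : k < n+1 then F ⟨k, h⟩ else 1)
    (fun k => if h : k < n+1 then L ⟨k, h⟩ else 1)
    (fun k => if h : k < n+1 then Pr ⟨k, h⟩ else 1)
    (by -- hEsa
      intro l
      by_cases h : l < n
      · simp only [dif_pos h]; exact hEsa ⟨l, h⟩
      · simp only [dif_neg h, star_one])
    (by -- hbraid
      intro l hl
      have h1 : l < n := by omega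
      simp only [dif_pos h1, dif_pos hl]
      exact hbraid ⟨l, h1⟩ ⟨l+1, hl⟩ rfl)
    (by -- hfar
      intro l m hlm
      by_cases hm : m < n
      · have hl : l < n := by omega
        simp only [dif_pos hm, dif_pos hl]
        exact hfar ⟨l, hl⟩ ⟨m, hm⟩ hlm
      · simp only [dif_neg hm, mul_one, one_mul])
    (by -- hZcomm
      intro l hl
      have h1 : l < n := by omega
      simp only [dif_pos h1]
      exact hZcomm ⟨l, h1⟩ hl)
    (by -- hrefl
      intro l hl
      have h1 : l < n := by omega
      simp only [dif_pos h1]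
      exact hrefl ⟨l, h1⟩ hl)
    (by -- hFlast
      simp only [dif_pos (Nat.lt_succ_self n)]
      exact hFlast)
    (by -- hFstep
      intro k hk
      simp only [dif_pos (show k < n + 1 by omega), dif_pos (show k + 1 < n + 1 by omega),
        dif_pos hk]
      exact hFstep ⟨k, hk⟩)
    (by -- hL
      intro k hk
      simp only [dif_pos (show k < n + 1 by omega)]
      exact hL ⟨k, by omega⟩)
    (by -- hPrlast
      simp only [dif_pos (Nat.lt_succ_self n)]
      exact hPrlast)
    (by -- hPrstep
      intro k hk
      simp only [dif_pos (show k < n + 1 by omega), dif_pos (show k + 1 < n + 1 by omega)]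
      exact hPrstep ⟨k, hk⟩)
  obtain ⟨C1, C2⟩ := main
  have hLv : ∀ j : Fin (n+1), (if h : (j : ℕ) < n+1 then L ⟨(j : ℕ), h⟩ else 1) = L j := by
    intro j; simp [j.isLt]
  have hPrv : ∀ j : Fin (n+1), (if h : (j : ℕ) < n+1 then Pr ⟨(j : ℕ), h⟩ else 1) = Pr j := by
    intro j; simp [j.isLt]
  have hFv : ∀ j : Fin (n+1), (if h : (j : ℕ) < n+1 then F ⟨(j : ℕ), h⟩ else 1) = F j := by
    intro j; simp [j.isLt]
  constructor
  · intro k k'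
    rcases lt_trichotomy (k : ℕ) (k' : ℕ) with h | h | h
    · have := C1 (k : ℕ) (k' : ℕ) h (by omega)
      simpa only [hLv] using this
    · have : k = k' := Fin.ext h
      rw [this]
    · have := C1 (k' : ℕ) (k : ℕ) h (by omega)
      simpa only [hLv] using this.symm
  · intro k
    have := C2 (k : ℕ) (by omega)
    simpa only [hPrv, hFv] using this
end
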